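/- arXiv:1705.11090 — 5 statements merged into one kernel-verified Lean document; each statement's English description precedes it below -/
import Mathlib

section
/- For every n ≥ 1, the class of all finite structures of the form (A, ≤₁, …, ≤ₙ), where each ≤ᵢ is a linear order on the finite set A, has the Ramsey property: for every integer k ≥ 2 and all structures A and B in the class such that there exists an embedding of A into B, there exists a structure C in the class such that for every coloring of the set of embeddings of A into C with k colors, there is an embedding w of B into C and a color i such that w ∘ e receives color i for every embedding e of A into B. -/
/-!
Take `C = Fin n → Fin N`, where the `i`-th order compares `i`-th coordinates first and breaks
ties lexicographically. A choice of chains `s i : Fin a ↪o Fin N`, one per coordinate, embeds a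
structure `A` with `|A| = a` into `C` by sending `x` to `fun i => s i (rank of x in ≤ᵢ)`, and an
embedding `e : A → B` acts on these parameters by precomposition with the rank maps it induces.
A colouring of the embeddings of `A` thus becomes a colouring of `n`-tuples of `a`-chains in
`Fin N`, and the product Ramsey theorem for chains gives a tuple of `b`-chains, i.e. a copy of `B`,
all of whose `a`-subchains have one colour. The product theorem follows from the hypergraph
Ramsey theorem by induction on `n`, colouring the first chain by the colouring it induces on the
remaining coordinates.
-/

/-- An embedding between structures with `t` binary relations:
an injective map such that each relation holds iff its image holds. -/
def IsEmb {t : ℕ} {A B : Type} (R : Fin t → A → A → Prop) (S : Fin t → B → B → Prop)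
    (f : A → B) : Prop :=
  Function.Injective f ∧ ∀ i x y, R i x y ↔ S i (f x) (f y)

theorem IsEmb.comp {t : ℕ} {A B C : Type} {R : Fin t → A → A → Prop}
    {S : Fin t → B → B → Prop} {T : Fin t → C → C → Prop} {f : A → B} {g : B → C}
    (hf : IsEmb R S f) (hg : IsEmb S T g) : IsEmb R T (g ∘ f) :=
  ⟨hg.1.comp hf.1, fun i x y => (hf.2 i x y).trans (hg.2 i (f x) (f y))⟩

/-- A structure consisting of `n` linear orders. -/
def AllLinear {n : ℕ} {A : Type} (R : Fin n → A → A → Prop) : Prop :=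
  ∀ i, IsLinearOrder A (R i)

open Finset

namespace Ramsey

variable {α κ : Type}

def IsHomogeneous (χ : Finset α → κ) (a : ℕ) (Y : Finset α) : Prop :=
  ∃ c, ∀ S ⊆ Y, #S = a → χ S = c

theorem IsHomogeneous.mono {χ : Finset α → κ} {a : ℕ} {X Y : Finset α}
    (hY : IsHomogeneous χ a Y) (hXY : X ⊆ Y) : IsHomogeneous χ a X :=
  let ⟨c, hc⟩ := hY
  ⟨c, fun S hS => hc S (hS.trans hXY)⟩

/-- The arrow relation `N → (m)^a_κ`. -/
def Arrows (κ : Type) (a m N : ℕ) : Prop :=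
  ∀ (α : Type) [LinearOrder α] (V : Finset α), N ≤ #V → ∀ χ : Finset α → κ,
    ∃ Y ⊆ V, #Y = m ∧ IsHomogeneous χ a Y

theorem Arrows.mono {a m N M : ℕ} (h : Arrows κ a m N) (hNM : N ≤ M) : Arrows κ a m M :=
  fun α _ V hV χ => h α V (hNM.trans hV) χ

def IsEndHomogeneous [LinearOrder α] (χ : Finset α → κ) (a : ℕ) (X : Finset α) : Prop :=
  ∃ f : α → κ, ∀ x ∈ X, ∀ S ⊆ X, (∀ y ∈ S, x < y) → #S = a → χ (insert x S) = f x

section LinearOrder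

variable [LinearOrder α] {χ : Finset α → κ} {a : ℕ} {X : Finset α}

theorem isEndHomogeneous_empty [Nonempty κ] : IsEndHomogeneous χ a ∅ :=
  ⟨fun _ => Classical.arbitrary κ, fun _ hx => absurd hx (notMem_empty _)⟩

theorem IsEndHomogeneous.insert {x₀ : α} (hX : IsEndHomogeneous χ a X)
    (hx₀ : ∀ y ∈ X, x₀ < y) (h₀ : IsHomogeneous (fun S => χ (insert x₀ S)) a X) :
    IsEndHomogeneous χ a (insert x₀ X) := by
  classical
  obtain ⟨f, hf⟩ := hX
  obtain ⟨c₀, hc₀⟩ := h₀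
  refine ⟨Function.update f x₀ c₀, fun x hx S hSX hxS hS => ?_⟩
  have hSX' : S ⊆ X := fun y hy => by
    rcases mem_insert.mp (hSX hy) with rfl | hy'
    · rcases mem_insert.mp hx with rfl | hx
      · exact absurd (hxS _ hy) (lt_irrefl _)
      · exact absurd (hxS _ hy) (hx₀ x hx).asymm
    · exact hy'
  rcases mem_insert.mp hx with rfl | hx
  · rw [Function.update_self]
    exact hc₀ S hSX' hS
  · rw [Function.update_of_ne (hx₀ x hx).ne']
    exact hf x hx S hSX' hxS hS

/-- Pigeonhole on the colours of the least elements. -/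
theorem IsEndHomogeneous.exists_isHomogeneous [Fintype κ] [Nonempty κ] {m : ℕ}
    (hX : IsEndHomogeneous χ a X) (hm : Fintype.card κ * m ≤ #X) :
    ∃ Y ⊆ X, #Y = m ∧ IsHomogeneous χ (a + 1) Y := by
  classical
  obtain ⟨f, hf⟩ := hX
  obtain ⟨c, -, hc⟩ := exists_le_card_fiber_of_mul_le_card_of_maps_to (f := f)
    (fun _ _ => mem_univ _) univ_nonempty (by simpa using hm)
  obtain ⟨Y, hYc, hY⟩ := exists_subset_card_eq hc
  have hYX : Y ⊆ X := hYc.trans (filter_subset _ _)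
  refine ⟨Y, hYX, hY, c, fun S hSY hS => ?_⟩
  have hne : S.Nonempty := card_pos.mp (by omega)
  have hmin := min'_mem S hne
  obtain ⟨hminX, hminc⟩ := mem_filter.mp (hYc (hSY hmin))
  rw [← insert_erase hmin, ← hminc]
  exact hf _ hminX _ ((erase_subset _ _).trans (hSY.trans hYX))
    (fun y hy => min'_lt_of_mem_erase_min' _ _ hy) (by rw [card_erase_of_mem hmin, hS]; rfl)

end LinearOrder

theorem exists_isEndHomogeneous [Nonempty κ] {a : ℕ} (ha : ∀ m, ∃ N, Arrows κ a m N) (r : ℕ) :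
    ∃ N, ∀ (α : Type) [LinearOrder α] (V : Finset α), N ≤ #V → ∀ χ : Finset α → κ,
      ∃ X ⊆ V, #X = r ∧ IsEndHomogeneous χ a X := by
  induction r with
  | zero => exact ⟨0, fun _ _ _ _ _ => ⟨∅, empty_subset _, card_empty, isEndHomogeneous_empty⟩⟩
  | succ r ih =>
    obtain ⟨N₁, h₁⟩ := ih
    obtain ⟨N₂, h₂⟩ := ha N₁
    refine ⟨N₂ + 1, fun α _ V hV χ => ?_⟩
    have hne : V.Nonempty := card_pos.mp (by omega)
    have hx₀ := min'_mem V hne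
    obtain ⟨Y, hYV, hY, hYhom⟩ := h₂ α (V.erase (V.min' hne))
      (by rw [card_erase_of_mem hx₀]; omega) (fun S => χ (insert (V.min' hne) S))
    obtain ⟨X, hXY, hX, hXend⟩ := h₁ α Y hY.ge χ
    have hXV : X ⊆ V.erase (V.min' hne) := hXY.trans hYV
    refine ⟨insert (V.min' hne) X, insert_subset hx₀ (hXV.trans (erase_subset _ _)), ?_,
      hXend.insert (fun y hy => min'_lt_of_mem_erase_min' _ _ (hXV hy)) (hYhom.mono hXY)⟩
    rw [card_insert_of_notMem fun h => notMem_erase _ _ (hXV h), hX]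

theorem exists_arrows (κ : Type) [Fintype κ] [Nonempty κ] (a m : ℕ) : ∃ N, Arrows κ a m N := by
  induction a generalizing m with
  | zero =>
    refine ⟨m, fun α _ V hV χ => ?_⟩
    obtain ⟨Y, hYV, hY⟩ := exists_subset_card_eq hV
    exact ⟨Y, hYV, hY, χ ∅, fun S _ hS => by rw [card_eq_zero.mp hS]⟩
  | succ a ih =>
    obtain ⟨N, hN⟩ := exists_isEndHomogeneous ih (Fintype.card κ * m)
    refine ⟨N, fun α _ V hV χ => ?_⟩
    obtain ⟨X, hXV, hX, hXend⟩ := hN α V hV χ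
    obtain ⟨Y, hYX, hY, hYhom⟩ := hXend.exists_isHomogeneous hX.ge
    exact ⟨Y, hYX.trans hXV, hY, hYhom⟩

def OrderEmbArrows (κ : Type) (a b N : ℕ) : Prop :=
  ∀ χ : (Fin a ↪o Fin N) → κ, ∃ (t : Fin b ↪o Fin N) (c : κ),
    ∀ s : Fin a ↪o Fin b, χ (s.trans t) = c

def PiOrderEmbArrows (κ : Type) (n a b N : ℕ) : Prop :=
  ∀ χ : (Fin n → Fin a ↪o Fin N) → κ, ∃ (t : Fin n → Fin b ↪o Fin N) (c : κ),
    ∀ s : Fin n → Fin a ↪o Fin b, χ (fun i => (s i).trans (t i)) = c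

theorem Arrows.orderEmbArrows [Nonempty κ] {a b N : ℕ} (h : Arrows κ a b N) :
    OrderEmbArrows κ a b N := by
  classical
  intro χ
  obtain ⟨Y, -, hY, c, hc⟩ := h (Fin N) univ (by simp)
    fun S => if hS : #S = a then χ (S.orderEmbOfFin hS) else Classical.arbitrary κ
  refine ⟨Y.orderEmbOfFin hY, c, fun s => ?_⟩
  let S := univ.map (s.trans (Y.orderEmbOfFin hY)).toEmbedding
  have hS : #S = a := by simp [S]
  have hSY : S ⊆ Y := by
    intro y
    simp only [S, mem_map, mem_univ, true_and]
    rintro ⟨j, rfl⟩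
    exact orderEmbOfFin_mem Y hY _
  have := hc S hSY hS
  dsimp only at this
  rwa [dif_pos hS, ← orderEmbOfFin_unique' hS (f := s.trans (Y.orderEmbOfFin hY))
    fun j => mem_map_of_mem _ (mem_univ j)] at this

theorem piOrderEmbArrows_zero (a b N : ℕ) : PiOrderEmbArrows κ 0 a b N :=
  fun χ => ⟨finZeroElim, χ finZeroElim, fun _ => congrArg χ (Subsingleton.elim _ _)⟩

theorem PiOrderEmbArrows.succ {n a b N₁ N : ℕ}
    (h₀ : OrderEmbArrows ((Fin n → Fin a ↪o Fin N₁) → κ) a b N)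
    (h₁ : PiOrderEmbArrows κ n a b N₁) (hN : N₁ ≤ N) : PiOrderEmbArrows κ (n + 1) a b N := by
  intro χ
  let ι := Fin.castLEOrderEmb hN
  obtain ⟨t₀, c₀, ht₀⟩ := h₀ fun s₀ s => χ (Fin.cons s₀ fun i => (s i).trans ι)
  obtain ⟨t, c, ht⟩ := h₁ c₀
  refine ⟨Fin.cons t₀ fun i => (t i).trans ι, c, fun s => ?_⟩
  rw [← ht fun i => s i.succ, ← ht₀ (s 0)]
  congr 1
  funext i
  cases i using Fin.cases <;> rfl

theorem exists_piOrderEmbArrows (κ : Type) [Fintype κ] [Nonempty κ] (n a b : ℕ) :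
    ∃ N, PiOrderEmbArrows κ n a b N := by
  induction n with
  | zero => exact ⟨0, piOrderEmbArrows_zero a b 0⟩
  | succ n ih =>
    obtain ⟨N₁, h₁⟩ := ih
    obtain ⟨N₀, h₀⟩ := exists_arrows ((Fin n → Fin a ↪o Fin N₁) → κ) a b
    exact ⟨max N₀ N₁, PiOrderEmbArrows.succ (h₀.mono (le_max_left N₀ N₁)).orderEmbArrows h₁
      (le_max_right N₀ N₁)⟩

end Ramsey

noncomputable def IsLinearOrder.rankIso {X : Type} [Fintype X] {r : X → X → Prop}
    (h : IsLinearOrder X r) :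
    r ≃r ((· ≤ ·) : Fin (Fintype.card X) → Fin (Fintype.card X) → Prop) :=
  letI : LinearOrder X :=
    { le := r
      le_refl := h.refl
      le_trans := h.trans
      le_antisymm := h.antisymm
      le_total := h.total
      toDecidableLE := Classical.decRel r }
  (Fintype.orderIsoFinOfCardEq X rfl).symm

section LexOrders

variable {n N : ℕ}

def lexKey (i : Fin n) (v : Fin n → Fin N) : Fin N ×ₗ Lex (Fin n → Fin N) :=
  toLex (v i, toLex v)

def lexOrders (n N : ℕ) (i : Fin n) : (Fin n → Fin N) → (Fin n → Fin N) → Prop :=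
  Function.onFun (· ≤ ·) (lexKey i)

theorem lexKey_injective (i : Fin n) : Function.Injective (lexKey (N := N) i) :=
  fun _ _ h => congrArg (fun p : Fin N ×ₗ Lex (Fin n → Fin N) => ofLex (ofLex p).2) h

theorem allLinear_lexOrders (n N : ℕ) : AllLinear (lexOrders n N) := fun i =>
  (lexKey_injective i).isLinearOrder_onFun _

theorem lexOrders_iff_of_ne {i : Fin n} {v w : Fin n → Fin N} (h : v i ≠ w i) :
    lexOrders n N i v w ↔ v i ≤ w i := by
  simp only [lexOrders, Function.onFun, lexKey, Prod.Lex.toLex_le_toLex, h, false_and, or_false]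
  exact h.le_iff_lt.symm

end LexOrders

namespace AllLinear

variable {n N : ℕ} {X : Type} [Fintype X] {R : Fin n → X → X → Prop}

noncomputable def embed (hR : AllLinear R) (s : Fin n → Fin (Fintype.card X) ↪o Fin N)
    (x : X) : Fin n → Fin N :=
  fun i => s i ((hR i).rankIso x)

theorem embed_le_embed_iff (hR : AllLinear R) (s : Fin n → Fin (Fintype.card X) ↪o Fin N)
    (i : Fin n) (x y : X) : hR.embed s x i ≤ hR.embed s y i ↔ R i x y :=
  (s i).le_iff_le.trans (hR i).rankIso.map_rel_iff

theorem embed_injective (hR : AllLinear R) (s : Fin n → Fin (Fintype.card X) ↪o Fin N)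
    (i : Fin n) : Function.Injective (hR.embed s · i) :=
  fun _ _ h => (hR i).rankIso.injective ((s i).injective h)

theorem isEmb_embed (hn : 0 < n) (hR : AllLinear R) (s : Fin n → Fin (Fintype.card X) ↪o Fin N) :
    IsEmb R (lexOrders n N) (hR.embed s) := by
  refine ⟨fun x y h => hR.embed_injective s ⟨0, hn⟩ (congrFun h _), fun i x y => ?_⟩
  rcases eq_or_ne x y with rfl | hxy
  · simp only [(hR i).refl, true_iff]
    exact (allLinear_lexOrders n N i).refl _
  · rw [lexOrders_iff_of_ne ((hR.embed_injective s i).ne hxy), embed_le_embed_iff]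

end AllLinear

namespace IsEmb

variable {n : ℕ} {X Y : Type} [Fintype X] [Fintype Y]
  {R : Fin n → X → X → Prop} {S : Fin n → Y → Y → Prop} {e : X → Y}

noncomputable def rankEmb (he : IsEmb R S e) (hR : AllLinear R) (hS : AllLinear S) (i : Fin n) :
    Fin (Fintype.card X) ↪o Fin (Fintype.card Y) :=
  .ofMapLEIff (fun j => (hS i).rankIso (e ((hR i).rankIso.symm j))) fun _ _ =>
    ((hS i).rankIso.map_rel_iff.trans (he.2 i _ _).symm).trans (hR i).rankIso.symm.map_rel_iff

theorem embed_comp (he : IsEmb R S e) (hR : AllLinear R) (hS : AllLinear S) {N : ℕ}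
    (t : Fin n → Fin (Fintype.card Y) ↪o Fin N) :
    hS.embed t ∘ e = hR.embed fun i => (he.rankEmb hR hS i).trans (t i) := by
  funext x i
  simp [AllLinear.embed, rankEmb]

end IsEmb

theorem finite_multiple_linear_orders_ramsey_general (n : ℕ) (hn : 1 ≤ n) (k : ℕ) (hk : 2 ≤ k)
    (A B : Type) [Fintype A] [Fintype B]
    (RA : Fin n → A → A → Prop) (RB : Fin n → B → B → Prop)
    (hA : AllLinear RA) (hB : AllLinear RB) :
    ∃ (C : Type) (_ : Fintype C) (RC : Fin n → C → C → Prop),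
      AllLinear RC ∧
      ∀ χ : {f : A → C // IsEmb RA RC f} → Fin k,
        ∃ (w : {g : B → C // IsEmb RB RC g}) (i : Fin k),
          ∀ e : {f : A → B // IsEmb RA RB f},
            χ ⟨w.1 ∘ e.1, e.2.comp w.2⟩ = i := by
  have : Nonempty (Fin k) := ⟨⟨0, by omega⟩⟩
  obtain ⟨N, hN⟩ := Ramsey.exists_piOrderEmbArrows (Fin k) n (Fintype.card A) (Fintype.card B)
  refine ⟨Fin n → Fin N, inferInstance, lexOrders n N, allLinear_lexOrders n N, fun χ => ?_⟩
  obtain ⟨t, c, ht⟩ := hN fun s => χ ⟨hA.embed s, hA.isEmb_embed hn s⟩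
  refine ⟨⟨hB.embed t, hB.isEmb_embed hn t⟩, c, fun e => ?_⟩
  rw [← ht fun i => e.2.rankEmb hA hB i]
  congr 2
  exact e.2.embed_comp hA hB t

/-- For every `n ≥ 1`, the class of all finite structures consisting of `n`
linear orders has the Ramsey property. -/
theorem finite_multiple_linear_orders_ramsey (n : ℕ) (hn : 1 ≤ n) (k : ℕ) (hk : 2 ≤ k)
    (A B : Type) [Fintype A] [Fintype B]
    (RA : Fin n → A → A → Prop) (RB : Fin n → B → B → Prop)
    (hA : AllLinear RA) (hB : AllLinear RB)
    (hAB : ∃ f : A → B, IsEmb RA RB f) :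
    ∃ (C : Type) (_ : Fintype C) (RC : Fin n → C → C → Prop),
      AllLinear RC ∧
      ∀ χ : {f : A → C // IsEmb RA RC f} → Fin k,
        ∃ (w : {g : B → C // IsEmb RB RC g}) (i : Fin k),
          ∀ e : {f : A → B // IsEmb RA RB f},
            χ ⟨w.1 ∘ e.1, e.2.comp w.2⟩ = i :=
  finite_multiple_linear_orders_ramsey_general n hn k hk A B RA RB hA hB
end

section
/- Let Σ₁, …, Σₙ (n ≥ 2) be pairwise disjoint relational first-order languages (no function or constant symbols), and for each i let Kᵢ be a class of finite Σᵢ-structures which has the hereditary property (with respect to all finite Σᵢ-structures), the joint embedding property, the strong amalgamation property, and the Ramsey property. Then the class ⊗ᵢ Kᵢ, consisting of all finite structures over the union language Θ = Σ₁ ∪ … ∪ Σₙ whose Σᵢ-reduct belongs to Kᵢ for every i ∈ {1, …, n}, has the Ramsey property. -/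
/-- A relational first-order language: a type of relation symbols, each with an arity. -/
structure RelLang : Type 1 where
  Rel : Type
  ar : Rel → ℕ

/-- A structure for a relational language `L` on a carrier `A`: an interpretation
of each relation symbol as a set of tuples. -/
def RelStruc (L : RelLang) (A : Type) : Type :=
  ∀ r : L.Rel, (Fin (L.ar r) → A) → Prop

/-- An embedding between `L`-structures: an injective map such that every
relation holds of a tuple iff it holds of its image. -/
def IsEmbS {L : RelLang} {A B : Type} (SA : RelStruc L A) (SB : RelStruc L B)
    (f : A → B) : Prop :=
  Function.Injective f ∧ ∀ (r : L.Rel) (x : Fin (L.ar r) → A), SA r x ↔ SB r (f ∘ x)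

theorem IsEmbS.comp {L : RelLang} {A B C : Type} {SA : RelStruc L A}
    {SB : RelStruc L B} {SC : RelStruc L C} {f : A → B} {g : B → C}
    (hf : IsEmbS SA SB f) (hg : IsEmbS SB SC g) : IsEmbS SA SC (g ∘ f) :=
  ⟨hg.1.comp hf.1, fun r x => (hf.2 r x).trans (hg.2 r (f ∘ x))⟩

/-- The disjoint union `Θ = Σ₁ ∪ … ∪ Σₙ` of the languages `L 0, …, L (n-1)`. -/
def unionLang {n : ℕ} (L : Fin n → RelLang) : RelLang :=
  ⟨Σ i : Fin n, (L i).Rel, fun r => (L r.1).ar r.2⟩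

/-- The `Σᵢ`-reduct of a `Θ`-structure. -/
def reduct {n : ℕ} {L : Fin n → RelLang} (i : Fin n) {A : Type}
    (S : RelStruc (unionLang L) A) : RelStruc (L i) A :=
  fun r x => S ⟨i, r⟩ x

/-- Hereditary property with respect to all finite `L`-structures. -/
def HP (L : RelLang) (K : ∀ A : Type, RelStruc L A → Prop) : Prop :=
  ∀ (B C : Type), Finite B → ∀ (SB : RelStruc L B) (SC : RelStruc L C),
    K C SC → (∃ f : B → C, IsEmbS SB SC f) → K B SB

/-- Joint embedding property. -/
def JEP (L : RelLang) (K : ∀ A : Type, RelStruc L A → Prop) : Prop :=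
  ∀ (A B : Type) (SA : RelStruc L A) (SB : RelStruc L B), K A SA → K B SB →
    ∃ (C : Type) (SC : RelStruc L C), K C SC ∧
      (∃ f : A → C, IsEmbS SA SC f) ∧ (∃ g : B → C, IsEmbS SB SC g)

/-- Strong amalgamation property. -/
def SAP (L : RelLang) (K : ∀ A : Type, RelStruc L A → Prop) : Prop :=
  ∀ (A B C : Type) (SA : RelStruc L A) (SB : RelStruc L B) (SC : RelStruc L C),
    K A SA → K B SB → K C SC →
    ∀ (f₁ : A → B) (f₂ : A → C), IsEmbS SA SB f₁ → IsEmbS SA SC f₂ →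
    ∃ (D : Type) (SD : RelStruc L D), K D SD ∧
      ∃ (g₁ : B → D) (g₂ : C → D), IsEmbS SB SD g₁ ∧ IsEmbS SC SD g₂ ∧
        g₁ ∘ f₁ = g₂ ∘ f₂ ∧
        Set.range g₁ ∩ Set.range g₂ = Set.range (g₁ ∘ f₁) ∧
        Set.range (g₁ ∘ f₁) = Set.range (g₂ ∘ f₂)

/-- The Ramsey property for a class of `L`-structures. -/
def RamseyClass (L : RelLang) (K : ∀ A : Type, RelStruc L A → Prop) : Prop :=
  ∀ k : ℕ, 2 ≤ k → ∀ (A B : Type) (SA : RelStruc L A) (SB : RelStruc L B),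
    K A SA → K B SB → (∃ f : A → B, IsEmbS SA SB f) →
    ∃ (C : Type) (SC : RelStruc L C), K C SC ∧
      ∀ χ : {f : A → C // IsEmbS SA SC f} → Fin k,
        ∃ (w : {g : B → C // IsEmbS SB SC g}) (i : Fin k),
          ∀ e : {f : A → B // IsEmbS SA SB f},
            χ ⟨w.1 ∘ e.1, e.2.comp w.2⟩ = i

/-!
It suffices to combine two classes `K₁`, `K₂` and induct on the number of classes. Given
`A ≤ B`, take a Ramsey witness `D₂` for `K₂`, then a witness `D₁` for `K₁` whose colours are
the colourings of the copies of `A` in `D₂`. A copy `(p, q)` of `A` in `D₁ × D₂` gets the colour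
`χ (p, q)`: the witness `D₁` fixes `p` inside a copy of `B`, making the colour a function of `q`
alone, and `D₂` then fixes `q`.

For this, `D₁ × D₂` must carry a `K₁`-structure in which `(p, q)` is an embedding whenever `p`
is, and likewise for `K₂`. Such a structure is a blow-up of `D₁` along the first projection:
it agrees with `D₁` on tuples the projection does not collapse. Blow-ups are built from HP and
SAP one point at a time: the new point is the copy of an old point `x` in a strong amalgam of
the structure with itself over the complement of `x`.
-/

/-- The partition arrow `C ⟶ (B)^A_S`. Colouring all maps `A → C`, not only the embeddings,
changes nothing and avoids subtypes. -/
def Arrows {A B C : Type} (S : Type) (embAB : (A → B) → Prop) (embBC : (B → C) → Prop) :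
    Prop :=
  ∀ χ : (A → C) → S, ∃ w, embBC w ∧ ∃ s, ∀ e, embAB e → χ (w ∘ e) = s

theorem Arrows.mono {A B C S : Type} {p p' : (A → B) → Prop} {q q' : (B → C) → Prop}
    (h : Arrows S p q) (hp : ∀ e, p' e → p e) (hq : ∀ w, q w → q' w) : Arrows S p' q' := by
  intro χ
  obtain ⟨w, hw, s, hs⟩ := h χ
  exact ⟨w, hq w hw, s, fun e he => hs e (hp e he)⟩

theorem Arrows.prod {A B D₁ D₂ S : Type} {p₁ p₂ : (A → B) → Prop}
    {q₁ : (B → D₁) → Prop} {q₂ : (B → D₂) → Prop}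
    (h₁ : Arrows ((A → D₂) → S) p₁ q₁) (h₂ : Arrows S p₂ q₂) :
    Arrows S (fun e => p₁ e ∧ p₂ e) (fun w => q₁ (Prod.fst ∘ w) ∧ q₂ (Prod.snd ∘ w)) := by
  intro χ
  obtain ⟨w₁, hw₁, F, hF⟩ := h₁ fun p q => χ fun a => (p a, q a)
  obtain ⟨w₂, hw₂, s, hs⟩ := h₂ F
  exact ⟨fun b => (w₁ b, w₂ b), ⟨hw₁, hw₂⟩, s,
    fun e ⟨he₁, he₂⟩ => (congrFun (hF e he₁) (w₂ ∘ e)).trans (hs e he₂)⟩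

def RamseyWith (L : RelLang) (K : ∀ A : Type, RelStruc L A → Prop) (S : Type) : Prop :=
  ∀ (A B : Type) (SA : RelStruc L A) (SB : RelStruc L B), K A SA → K B SB →
    (∃ f : A → B, IsEmbS SA SB f) →
    ∃ (C : Type) (SC : RelStruc L C), K C SC ∧ Arrows S (IsEmbS SA SB) (IsEmbS SB SC)

section Ramsey

variable {L : RelLang} {K : ∀ A : Type, RelStruc L A → Prop}

theorem RamseyClass.ramseyWith (h : RamseyClass L K) (S : Type) [Finite S] :
    RamseyWith L K S := by
  intro A B SA SB hA hB ⟨f₀, hf₀⟩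
  obtain ⟨m, ⟨eS⟩⟩ := Finite.exists_equiv_fin S
  obtain ⟨C, SC, hC, hW⟩ := h (m + 2) (by omega) A B SA SB hA hB ⟨f₀, hf₀⟩
  refine ⟨C, SC, hC, fun χ => ?_⟩
  obtain ⟨w, i, hw⟩ := hW fun g => Fin.castLE (by omega) (eS (χ g.1))
  refine ⟨w.1, w.2, χ (w.1 ∘ f₀), fun e he => ?_⟩
  exact eS.injective (Fin.castLE_injective _ ((hw ⟨e, he⟩).trans (hw ⟨f₀, hf₀⟩).symm))

theorem RamseyClass.of_ramseyWith (h : ∀ k, RamseyWith L K (Fin k)) : RamseyClass L K := by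
  classical
  intro k hk A B SA SB hA hB hAB
  obtain ⟨C, SC, hC, harr⟩ := h k A B SA SB hA hB hAB
  refine ⟨C, SC, hC, fun χ => ?_⟩
  obtain ⟨w, hw, i, hi⟩ :=
    harr fun g => if hg : IsEmbS SA SC g then χ ⟨g, hg⟩ else ⟨0, by omega⟩
  exact ⟨⟨w, hw⟩, i, fun e => by simpa [dif_pos (e.2.comp hw)] using hi e.1 e.2⟩

end Ramsey

def RelStruc.comap {L : RelLang} {A B : Type} (f : A → B) (S : RelStruc L B) :
    RelStruc L A :=
  fun r x => S r (f ∘ x)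

theorem isEmbS_comap {L : RelLang} {A B : Type} {f : A → B} (hf : Function.Injective f)
    (S : RelStruc L B) : IsEmbS (S.comap f) S f :=
  ⟨hf, fun _ _ => Iff.rfl⟩

def IsBlowup {L : RelLang} {E D : Type} (SE : RelStruc L E) (SD : RelStruc L D)
    (π : E → D) : Prop :=
  ∀ (r : L.Rel) (z : Fin (L.ar r) → E),
    (∀ a b, π (z a) = π (z b) → z a = z b) → (SE r z ↔ SD r (π ∘ z))

def HasBlowups (L : RelLang) (K : ∀ A : Type, RelStruc L A → Prop) : Prop :=
  ∀ (D : Type) (SD : RelStruc L D), K D SD → ∀ (P : Type) [Finite P] (π : P → D),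
    ∃ SP : RelStruc L P, K P SP ∧ IsBlowup SP SD π

section Blowup

variable {L : RelLang} {K : ∀ A : Type, RelStruc L A → Prop} {E D : Type}
  {SE : RelStruc L E} {SD : RelStruc L D} {π : E → D}

theorem IsBlowup.isEmbS_of_comp (hπ : IsBlowup SE SD π) {X : Type} {SX : RelStruc L X}
    {g : X → E} (hg : IsEmbS SX SD (π ∘ g)) : IsEmbS SX SE g :=
  ⟨hg.1.of_comp, fun r x =>
    (hg.2 r x).trans (hπ r (g ∘ x) fun _ _ h => congrArg g (hg.1 h)).symm⟩

theorem IsBlowup.comap (hπ : IsBlowup SE SD π) {P : Type} (h : P → E) :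
    IsBlowup (SE.comap h) SD (π ∘ h) :=
  fun r z hz => hπ r (h ∘ z) fun a b hab => congrArg h (hz a b hab)

theorem IsBlowup.exists_option (hHP : HP L K) (hSAP : SAP L K) [Finite E] (hE : K E SE)
    (hπ : IsBlowup SE SD π) (x : E) :
    ∃ SE' : RelStruc L (Option E), K (Option E) SE' ∧
      IsBlowup SE' SD (fun o => π (o.getD x)) := by
  have hval : IsEmbS (SE.comap Subtype.val) SE (Subtype.val : {e // e ≠ x} → E) :=
    isEmbS_comap Subtype.val_injective SE
  obtain ⟨D₀, S₀, hD₀, g₁, g₂, hg₁, hg₂, hcomm, hrange, -⟩ :=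
    hSAP _ _ _ _ _ _ (hHP _ _ inferInstance _ _ hE ⟨_, hval⟩) hE hE _ _ hval hval
  have hnew : ∀ e, g₁ e ≠ g₂ x := by
    intro e he
    have hmem : g₁ e ∈ Set.range g₁ ∩ Set.range g₂ := ⟨⟨e, rfl⟩, ⟨x, he.symm⟩⟩
    rw [hrange] at hmem
    obtain ⟨a, ha⟩ := hmem
    rw [hcomm] at ha
    exact a.2 (hg₂.1 (ha.trans he))
  let θ : Option E → D₀ := fun o => o.elim (g₂ x) g₁
  have hθ : Function.Injective θ := by
    rintro (_ | a) (_ | b) h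
    · rfl
    · exact absurd h.symm (hnew b)
    · exact absurd h (hnew a)
    · exact congrArg some (hg₁.1 h)
  refine ⟨S₀.comap θ, hHP _ _ inferInstance _ _ hD₀ ⟨θ, isEmbS_comap hθ S₀⟩,
    fun r z hz => ?_⟩
  -- a tuple through the new point `none` avoids `some x`, so it lives in the second copy
  obtain ⟨g, hg, hθz⟩ : ∃ g, IsEmbS SE S₀ g ∧ θ ∘ z = g ∘ fun t => (z t).getD x := by
    by_cases hnone : ∃ t, z t = none
    · obtain ⟨t₀, ht₀⟩ := hnone
      refine ⟨g₂, hg₂, funext fun t => ?_⟩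
      rcases hzt : z t with _ | e
      · simp [θ, hzt]
      · have hex : e ≠ x := by
          rintro rfl
          simpa [hzt, ht₀] using hz t t₀ (by simp [hzt, ht₀])
        simpa [θ, hzt] using congrFun hcomm ⟨e, hex⟩
    · simp only [not_exists] at hnone
      refine ⟨g₁, hg₁, funext fun t => ?_⟩
      obtain ⟨e, he⟩ := Option.ne_none_iff_exists'.mp (hnone t)
      simp [θ, he]
  change S₀ r (θ ∘ z) ↔ _
  rw [hθz, ← hg.2, hπ r _ fun a b h => congrArg (·.getD x) (hz a b h)]
  rfl

theorem exists_blowup_of_map (hKfin : ∀ A SA, K A SA → Finite A) (hHP : HP L K)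
    (hSAP : SAP L K) (hD : K D SD) (P : Type) [Finite P] (π₀ : P → D) :
    ∃ (E : Type) (SE : RelStruc L E), K E SE ∧ ∃ π : E → D, Function.Surjective π ∧
      IsBlowup SE SD π ∧ ∃ h : P → E, Function.Injective h ∧ π ∘ h = π₀ := by
  induction P using Finite.induction_empty_option with
  | of_equiv eP ih =>
    obtain ⟨E, SE, hE, π, hsurj, hπ, h, hh, hπh⟩ := ih (π₀ ∘ eP)
    exact ⟨E, SE, hE, π, hsurj, hπ, h ∘ eP.symm, hh.comp eP.symm.injective,
      by rw [← Function.comp_assoc, hπh, Function.comp_assoc, eP.self_comp_symm]; rfl⟩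
  | h_empty => exact ⟨D, SD, hD, id, Function.surjective_id, fun _ _ _ => Iff.rfl,
      PEmpty.elim, fun a => a.elim, funext fun a => a.elim⟩
  | h_option ih =>
    obtain ⟨E, SE, hE, π, hsurj, hπ, h, hh, hπh⟩ := ih (π₀ ∘ some)
    obtain ⟨x, hx⟩ := hsurj (π₀ none)
    have := hKfin E SE hE
    obtain ⟨SE', hE', hπ'⟩ := hπ.exists_option hHP hSAP hE x
    refine ⟨Option E, SE', hE', _, fun d => ?_, hπ', Option.map h, Option.map_injective hh,
      funext ?_⟩
    · obtain ⟨e, he⟩ := hsurj d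
      exact ⟨some e, he⟩
    · rintro (_ | p)
      · exact hx
      · exact congrFun hπh p

theorem hasBlowups_of_hp_sap (hKfin : ∀ A SA, K A SA → Finite A) (hHP : HP L K)
    (hSAP : SAP L K) : HasBlowups L K := by
  intro D SD hD P _ π₀
  obtain ⟨E, SE, hE, π, -, hπ, h, hh, rfl⟩ := exists_blowup_of_map hKfin hHP hSAP hD P π₀
  exact ⟨SE.comap h, hHP _ _ inferInstance _ _ hE ⟨h, isEmbS_comap hh SE⟩, hπ.comap h⟩

end Blowup

theorem exists_arrows_pair {L₁ L₂ : RelLang} {K₁ : ∀ A : Type, RelStruc L₁ A → Prop}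
    {K₂ : ∀ A : Type, RelStruc L₂ A → Prop}
    (hfin₁ : ∀ A SA, K₁ A SA → Finite A) (hfin₂ : ∀ A SA, K₂ A SA → Finite A)
    (hbl₁ : HasBlowups L₁ K₁) (hbl₂ : HasBlowups L₂ K₂)
    (hR₁ : ∀ (T : Type) [Finite T], RamseyWith L₁ K₁ T) {S : Type} [Finite S]
    (hR₂ : RamseyWith L₂ K₂ S)
    {A B : Type} {SA₁ : RelStruc L₁ A} {SA₂ : RelStruc L₂ A}
    {SB₁ : RelStruc L₁ B} {SB₂ : RelStruc L₂ B}
    (hA₁ : K₁ A SA₁) (hA₂ : K₂ A SA₂) (hB₁ : K₁ B SB₁) (hB₂ : K₂ B SB₂)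
    (hAB₁ : ∃ f, IsEmbS SA₁ SB₁ f) (hAB₂ : ∃ f, IsEmbS SA₂ SB₂ f) :
    ∃ (C : Type) (SC₁ : RelStruc L₁ C) (SC₂ : RelStruc L₂ C), K₁ C SC₁ ∧ K₂ C SC₂ ∧
      Arrows S (fun e => IsEmbS SA₁ SB₁ e ∧ IsEmbS SA₂ SB₂ e)
        (fun w => IsEmbS SB₁ SC₁ w ∧ IsEmbS SB₂ SC₂ w) := by
  obtain ⟨D₂, SD₂, hD₂, W₂⟩ := hR₂ A B SA₂ SB₂ hA₂ hB₂ hAB₂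
  have := hfin₁ A SA₁ hA₁
  have := hfin₂ D₂ SD₂ hD₂
  obtain ⟨D₁, SD₁, hD₁, W₁⟩ := hR₁ ((A → D₂) → S) A B SA₁ SB₁ hA₁ hB₁ hAB₁
  have := hfin₁ D₁ SD₁ hD₁
  obtain ⟨SC₁, hC₁, hπ₁⟩ := hbl₁ D₁ SD₁ hD₁ (D₁ × D₂) Prod.fst
  obtain ⟨SC₂, hC₂, hπ₂⟩ := hbl₂ D₂ SD₂ hD₂ (D₁ × D₂) Prod.snd
  exact ⟨D₁ × D₂, SC₁, SC₂, hC₁, hC₂, (W₁.prod W₂).mono (fun _ he => he)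
    fun _ hw => ⟨hπ₁.isEmbS_of_comp hw.1, hπ₂.isEmbS_of_comp hw.2⟩⟩

section Product

variable {n : ℕ} {L : Fin n → RelLang} {X Y : Type}

def prodClass (K : ∀ i : Fin n, ∀ A : Type, RelStruc (L i) A → Prop) :
    ∀ A : Type, RelStruc (unionLang L) A → Prop :=
  fun A S => Finite A ∧ ∀ i : Fin n, K i A (reduct i S)

theorem IsEmbS.reduct {SX : RelStruc (unionLang L) X} {SY : RelStruc (unionLang L) Y}
    {f : X → Y} (hf : IsEmbS SX SY f) (i : Fin n) :
    IsEmbS (reduct i SX) (reduct i SY) f :=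
  ⟨hf.1, fun r => hf.2 ⟨i, r⟩⟩

theorem hasBlowups_prodClass {K : ∀ i : Fin n, ∀ A : Type, RelStruc (L i) A → Prop}
    (h : ∀ i, HasBlowups (L i) (K i)) :
    HasBlowups (unionLang L) (prodClass K) := by
  intro D SD hD P _ π
  choose SP hSP hπ using fun i => h i D (reduct i SD) (hD.2 i) P π
  exact ⟨fun r => SP r.1 r.2, ⟨inferInstance, hSP⟩, fun r => hπ r.1 r.2⟩

end Product

section Split

variable {m : ℕ} {L : Fin (m + 1) → RelLang} {X Y : Type}

def tailStruc (S : RelStruc (unionLang L) X) : RelStruc (unionLang (Fin.tail L)) X :=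
  fun r => S ⟨r.1.succ, r.2⟩

def consStruc (S₀ : RelStruc (L 0) X) (T : RelStruc (unionLang (Fin.tail L)) X) :
    RelStruc (unionLang L) X :=
  fun r => Fin.cases (motive := fun i => RelStruc (L i) X) S₀ (fun i => reduct i T) r.1 r.2

theorem prodClass_iff_tail {K : ∀ i : Fin (m + 1), ∀ A : Type, RelStruc (L i) A → Prop}
    {S : RelStruc (unionLang L) X} :
    prodClass K X S ↔ prodClass (Fin.tail K) X (tailStruc S) ∧ K 0 X (reduct 0 S) := by
  simp only [prodClass, Fin.forall_fin_succ (P := fun i => K i X (reduct i S))]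
  tauto

theorem isEmbS_iff_tail {SX : RelStruc (unionLang L) X} {SY : RelStruc (unionLang L) Y}
    {f : X → Y} :
    IsEmbS SX SY f ↔
      IsEmbS (tailStruc SX) (tailStruc SY) f ∧ IsEmbS (reduct 0 SX) (reduct 0 SY) f := by
  refine ⟨fun h => ⟨⟨h.1, fun r => h.2 ⟨r.1.succ, r.2⟩⟩, h.reduct 0⟩,
    fun ⟨h, h₀⟩ => ⟨h.1, ?_⟩⟩
  rintro ⟨i, ρ⟩
  induction i using Fin.cases with
  | zero => exact h₀.2 ρ
  | succ i => exact h.2 ⟨i, ρ⟩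

end Split

theorem ramseyWith_prodClass {m : ℕ} (L : Fin (m + 1) → RelLang)
    (K : ∀ i : Fin (m + 1), ∀ A : Type, RelStruc (L i) A → Prop)
    (hKfin : ∀ i A SA, K i A SA → Finite A) (hbl : ∀ i, HasBlowups (L i) (K i))
    (hR : ∀ i (S : Type) [Finite S], RamseyWith (L i) (K i) S) (S : Type) [Finite S] :
    RamseyWith (unionLang L) (prodClass K) S := by
  induction m generalizing S with
  | zero =>
    intro A B SA SB hA hB ⟨f, hf⟩
    obtain ⟨C, SC₀, hC, harr⟩ := hR 0 S A B (reduct 0 SA) (reduct 0 SB) (hA.2 0) (hB.2 0)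
      ⟨f, hf.reduct 0⟩
    refine ⟨C, consStruc SC₀ fun r => r.1.elim0,
      prodClass_iff_tail.2 ⟨⟨hKfin 0 C SC₀ hC, fun i => i.elim0⟩, hC⟩,
      harr.mono (fun _ he => (isEmbS_iff_tail.1 he).2)
        fun _ hw => isEmbS_iff_tail.2 ⟨⟨hw.1, fun r => r.1.elim0⟩, hw⟩⟩
  | succ m ih =>
    intro A B SA SB hA hB ⟨f, hf⟩
    rw [prodClass_iff_tail] at hA hB
    rw [isEmbS_iff_tail] at hf
    obtain ⟨C, SC₁, SC₀, hC₁, hC₀, harr⟩ := exists_arrows_pair (fun _ _ h => h.1) (hKfin 0)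
      (hasBlowups_prodClass fun i => hbl i.succ) (hbl 0)
      (fun T _ => ih (Fin.tail L) (Fin.tail K) (fun i => hKfin i.succ) (fun i => hbl i.succ)
        (fun i => hR i.succ) T)
      (hR 0 S) hA.1 hA.2 hB.1 hB.2 ⟨f, hf.1⟩ ⟨f, hf.2⟩
    exact ⟨C, consStruc SC₀ SC₁, prodClass_iff_tail.2 ⟨hC₁, hC₀⟩,
      harr.mono (fun _ he => isEmbS_iff_tail.1 he) fun _ hw => isEmbS_iff_tail.2 hw⟩

theorem sokic_product_ramsey_general (n : ℕ) (hn : 2 ≤ n) (L : Fin n → RelLang)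
    (K : ∀ i : Fin n, ∀ A : Type, RelStruc (L i) A → Prop)
    (hKfin : ∀ i A SA, K i A SA → Finite A)
    (hHP : ∀ i, HP (L i) (K i))
    (hSAP : ∀ i, SAP (L i) (K i))
    (hRamsey : ∀ i, RamseyClass (L i) (K i)) :
    RamseyClass (unionLang L)
      (fun A S => Finite A ∧ ∀ i : Fin n, K i A (reduct i S)) := by
  obtain ⟨m, rfl⟩ : ∃ m, n = m + 1 := ⟨n - 1, by omega⟩
  exact RamseyClass.of_ramseyWith fun k => ramseyWith_prodClass L K hKfin
    (fun i => hasBlowups_of_hp_sap (hKfin i) (hHP i) (hSAP i))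
    (fun i S _ => (hRamsey i).ramseyWith S) (Fin k)

/-- Sokić's theorem: if `K 0, …, K (n-1)` are classes of finite structures over
pairwise disjoint relational languages, each having HP, JEP, SAP and the Ramsey
property, then the class `⊗ᵢ Kᵢ` of all finite structures over the union language
whose `Σᵢ`-reduct belongs to `Kᵢ` for every `i` has the Ramsey property. -/
theorem sokic_product_ramsey (n : ℕ) (hn : 2 ≤ n) (L : Fin n → RelLang)
    (K : ∀ i : Fin n, ∀ A : Type, RelStruc (L i) A → Prop)
    (hKfin : ∀ i A SA, K i A SA → Finite A)
    (hHP : ∀ i, HP (L i) (K i))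
    (hJEP : ∀ i, JEP (L i) (K i))
    (hSAP : ∀ i, SAP (L i) (K i))
    (hRamsey : ∀ i, RamseyClass (L i) (K i)) :
    RamseyClass (unionLang L)
      (fun A S => Finite A ∧ ∀ i : Fin n, K i A (reduct i S)) :=
  sokic_product_ramsey_general n hn L K hKfin hHP hSAP hRamsey
end

section
/- Let Θ be a relational first-order language, let C be a class of finite Θ-structures, and let K be a subclass of C. Suppose C has the Ramsey property and K is closed for binary diagrams in C, meaning: for all A, B ∈ K, all finite index sets I and J, all functions j₁, j₂ : I → J, and all families of embeddings (u_p : A → B)_{p ∈ I} and (v_p : A → B)_{p ∈ I}, if there exist a structure D ∈ C and embeddings (e_j : B → D)_{j ∈ J} such that e_{j₁(p)} ∘ u_p = e_{j₂(p)} ∘ v_p for all p ∈ I, then there exist a structure D' ∈ K and embeddings (e'_j : B → D')_{j ∈ J} such that e'_{j₁(p)} ∘ u_p = e'_{j₂(p)} ∘ v_p for all p ∈ I. Then K has the Ramsey property. -/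
section Embeddings

variable {L : RelLang} {A B D E : Type}

abbrev Emb (SA : RelStruc L A) (SB : RelStruc L B) : Type :=
  {f : A → B // IsEmbS SA SB f}

def Emb.comp {SA : RelStruc L A} {SB : RelStruc L B} {SD : RelStruc L D}
    (g : Emb SB SD) (f : Emb SA SB) : Emb SA SD :=
  ⟨g.1 ∘ f.1, f.2.comp g.2⟩

def PreservesCoincidences (SA : RelStruc L A) {SB : RelStruc L B} {SD : RelStruc L D}
    {SE : RelStruc L E} (e : Emb SB SD → Emb SB SE) : Prop :=
  ∀ (g₁ g₂ : Emb SB SD) (u₁ u₂ : Emb SA SB),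
    g₁.comp u₁ = g₂.comp u₂ → (e g₁).comp u₁ = (e g₂).comp u₂

def RamseyWitness (α : Type) (SA : RelStruc L A) (SB : RelStruc L B) (SD : RelStruc L D) :
    Prop :=
  ∀ χ : Emb SA SD → α, ∃ (w : Emb SB SD) (i : α), ∀ u : Emb SA SB, χ (w.comp u) = i

theorem RamseyWitness.of_preservesCoincidences {α : Type} [Nonempty α] {SA : RelStruc L A}
    {SB : RelStruc L B} {SD : RelStruc L D} {SE : RelStruc L E}
    (hD : RamseyWitness α SA SB SD) (e : Emb SB SD → Emb SB SE)
    (he : PreservesCoincidences SA e) :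
    RamseyWitness α SA SB SE := by
  intro χ
  let pullback : Emb SA SD → α :=
    Function.extend (fun p : Emb SB SD × Emb SA SB => p.1.comp p.2)
      (fun p => χ ((e p.1).comp p.2)) (fun _ => Classical.arbitrary α)
  obtain ⟨w, i, hw⟩ := hD pullback
  have hχ : Function.FactorsThrough (fun p : Emb SB SD × Emb SA SB => χ ((e p.1).comp p.2))
      (fun p => p.1.comp p.2) := fun p q h => congrArg χ (he p.1 q.1 p.2 q.2 h)
  exact ⟨e w, i, fun u => (hχ.extend_apply _ (w, u)).symm.trans (hw u)⟩

end Embeddings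

def ClosedForBinaryDiagrams (L : RelLang) (C K : ∀ A : Type, RelStruc L A → Prop) : Prop :=
  ∀ (A B : Type) (SA : RelStruc L A) (SB : RelStruc L B),
    K A SA → K B SB →
    ∀ (I J : Type), Finite I → Finite J →
    ∀ (j₁ j₂ : I → J) (u v : I → Emb SA SB),
      (∃ (D : Type) (SD : RelStruc L D), C D SD ∧
        ∃ e : J → Emb SB SD,
          ∀ p : I, (e (j₁ p)).1 ∘ (u p).1 = (e (j₂ p)).1 ∘ (v p).1) →
      ∃ (D' : Type) (SD' : RelStruc L D'), K D' SD' ∧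
        ∃ e' : J → Emb SB SD',
          ∀ p : I, (e' (j₁ p)).1 ∘ (u p).1 = (e' (j₂ p)).1 ∘ (v p).1

theorem exists_preservesCoincidences_of_closedForBinaryDiagrams {L : RelLang}
    {C K : ∀ A : Type, RelStruc L A → Prop} (hclosed : ClosedForBinaryDiagrams L C K)
    {A B D : Type} [Finite A] [Finite B] [Finite D]
    {SA : RelStruc L A} {SB : RelStruc L B} {SD : RelStruc L D}
    (hA : K A SA) (hB : K B SB) (hD : C D SD) :
    ∃ (D' : Type) (SD' : RelStruc L D'), K D' SD' ∧
      ∃ e : Emb SB SD → Emb SB SD', PreservesCoincidences SA e := by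
  let I := {q : (Emb SB SD × Emb SB SD) × (Emb SA SB × Emb SA SB) //
    q.1.1.comp q.2.1 = q.1.2.comp q.2.2}
  obtain ⟨D', SD', hKD', e, he⟩ := hclosed A B SA SB hA hB I (Emb SB SD) inferInstance
    inferInstance (fun q => q.1.1.1) (fun q => q.1.1.2) (fun q => q.1.2.1) (fun q => q.1.2.2)
    ⟨D, SD, hD, id, fun q => congrArg Subtype.val q.2⟩
  exact ⟨D', SD', hKD', e, fun g₁ g₂ u₁ u₂ h =>
    Subtype.ext (he ⟨((g₁, g₂), (u₁, u₂)), h⟩)⟩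

/-- Transfer of the Ramsey property to a subclass closed for binary diagrams:
if `C` is a class of finite `L`-structures with the Ramsey property and `K ⊆ C`
is closed for binary diagrams in `C`, then `K` has the Ramsey property. -/
theorem ramsey_transfer_binary_diagrams (L : RelLang)
    (C K : ∀ A : Type, RelStruc L A → Prop)
    (hCfin : ∀ A SA, C A SA → Finite A)
    (hsub : ∀ A SA, K A SA → C A SA)
    (hCRamsey : RamseyClass L C)
    (hclosed : ∀ (A B : Type) (SA : RelStruc L A) (SB : RelStruc L B),
      K A SA → K B SB →
      ∀ (I J : Type), Finite I → Finite J →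
      ∀ (j₁ j₂ : I → J)
        (u v : I → {f : A → B // IsEmbS SA SB f}),
        (∃ (D : Type) (SD : RelStruc L D), C D SD ∧
          ∃ e : J → {g : B → D // IsEmbS SB SD g},
            ∀ p : I, (e (j₁ p)).1 ∘ (u p).1 = (e (j₂ p)).1 ∘ (v p).1) →
        ∃ (D' : Type) (SD' : RelStruc L D'), K D' SD' ∧
          ∃ e' : J → {g : B → D' // IsEmbS SB SD' g},
            ∀ p : I, (e' (j₁ p)).1 ∘ (u p).1 = (e' (j₂ p)).1 ∘ (v p).1) :
    RamseyClass L K := by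
  intro k hk A B SA SB hA hB hAB
  have hCA := hsub A SA hA
  have hCB := hsub B SB hB
  have := hCfin A SA hCA
  have := hCfin B SB hCB
  obtain ⟨D, SD, hCD, hD⟩ := hCRamsey k hk A B SA SB hCA hCB hAB
  have := hCfin D SD hCD
  obtain ⟨D', SD', hKD', e, he⟩ :=
    exists_preservesCoincidences_of_closedForBinaryDiagrams hclosed hA hB hCD
  have : Nonempty (Fin k) := ⟨⟨0, by omega⟩⟩
  exact ⟨D', SD', hKD', RamseyWitness.of_preservesCoincidences hD e he⟩
end

section
/- Let T = ({1, …, t}, ≼) be a template, let k₁, …, k_m be its isolated points, let T' be T with the isolated points removed, and let (i₁, j₁), …, (i_s, j_s) list all pairs of elements of T' with i_α strictly below j_α in T' and j_α maximal in T'. Then the class K̄(T) is closed for binary diagrams in C(s, m): for all A, B ∈ K̄(T), all finite index sets I and J, all functions j₁̂, j₂̂ : I → J, and all families of embeddings (u_p : A → B)_{p ∈ I} and (v_p : A → B)_{p ∈ I}, if there exist a structure D ∈ C(s, m) and embeddings (e_j : B → D)_{j ∈ J} such that e_{j₁̂(p)} ∘ u_p = e_{j₂̂(p)} ∘ v_p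 for all p ∈ I, then there exist a structure D' ∈ K̄(T) and embeddings (e'_j : B → D')_{j ∈ J} satisfying the same compatibility conditions e'_{j₁̂(p)} ∘ u_p = e'_{j₂̂(p)} ∘ v_p for all p ∈ I. -/
/-- `i` is an isolated point of the template `({1,…,t}, prec)`:
it is comparable to no other element. -/
def IsolatedPt {t : ℕ} (prec : Fin t → Fin t → Prop) (i : Fin t) : Prop :=
  ∀ j, j ≠ i → ¬ prec i j ∧ ¬ prec j i

/-- `j` is a maximal element of `T' = T` minus the isolated points. -/
def MaximalInT' {t : ℕ} (prec : Fin t → Fin t → Prop) (j : Fin t) : Prop :=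
  ∀ l, ¬ IsolatedPt prec l → prec j l → l = j

/-- The index (among `0,…,2s+m-1`) of the partial order `≤_{i_α}` (α-th of the
first `s` relations). -/
def loIdx {s m : ℕ} (α : Fin s) : Fin (2 * s + m) :=
  ⟨α.1, by have := α.isLt; omega⟩

/-- The index of the linear order `≤_{j_α}` (α-th of the middle `s` relations). -/
def hiIdx {s m : ℕ} (α : Fin s) : Fin (2 * s + m) :=
  ⟨s + α.1, by have := α.isLt; omega⟩

/-- The index of the `β`-th linear order among the last `s + m` relations. -/
def linIdx {s m : ℕ} (β : Fin (s + m)) : Fin (2 * s + m) :=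
  ⟨s + β.1, by have := β.isLt; omega⟩

/-- Membership in the class `K̄(T)`, via conditions (MP1)–(MP4), where
`ii, jj : Fin s → Fin t` enumerate the pairs `(i_α, j_α)`. -/
def KbarT {t s m : ℕ} (prec : Fin t → Fin t → Prop) (ii jj : Fin s → Fin t)
    {A : Type} (R : Fin (2 * s + m) → A → A → Prop) : Prop :=
  -- (MP1)
  (∀ α : Fin s, IsPartialOrder A (R (loIdx α))) ∧
  (∀ β : Fin (s + m), IsLinearOrder A (R (linIdx β))) ∧
  -- (MP2)
  (∀ α β : Fin s, prec (ii α) (ii β) → ∀ x y, R (loIdx α) x y → R (loIdx β) x y) ∧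
  -- (MP3)
  (∀ α β : Fin s, prec (ii α) (jj β) → ∀ x y, R (loIdx α) x y → R (hiIdx β) x y) ∧
  -- (MP4)
  (∀ α β : Fin s, jj α = jj β → ∀ x y, R (hiIdx α) x y ↔ R (hiIdx β) x y)

/-- Membership in the class `C(s, m)` (indices shifted to start from `0`):
the relations with index `< s` are partial orders, the relations with index
`≥ s` are linear orders, and for each index `i < s` the linear order with
index `s + i` extends the partial order with index `i`. -/
def Csm (s m : ℕ) {A : Type} (R : Fin (2 * s + m) → A → A → Prop) : Prop :=
  (∀ i : Fin (2 * s + m), (i : ℕ) < s → IsPartialOrder A (R i)) ∧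
  (∀ i : Fin (2 * s + m), s ≤ (i : ℕ) → IsLinearOrder A (R i)) ∧
  (∀ i j : Fin (2 * s + m), (i : ℕ) < s → (j : ℕ) = s + (i : ℕ) →
    ∀ x y, R i x y → R j x y)

/-!
Only the relations of the cone `D` have to change, never its maps. Keep the last `m` linear
orders; let the linear order `≤_{s+α}` become that of a fixed representative of the fibre of
`j` through `α`, which enforces (MP4); and let `≤_α` become the intersection of all `≤_γ` with
`i_α ≼ i_γ` and all new `≤_{s+β}` with `i_α ≼ j_β`, which enforces (MP2) and (MP3). Because `B`
already satisfies (MP2)–(MP4), the intersections restrict on the image of `B` to the relations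
that were there before, so every embedding of `B` into the old `D` stays an embedding.
-/

section FiberRep

variable {ι κ : Type*}

noncomputable def fiberRep (f : ι → κ) (a : ι) : ι :=
  (⟦a⟧ : Quotient (Setoid.ker f)).out

lemma apply_fiberRep (f : ι → κ) (a : ι) : f (fiberRep f a) = f a :=
  Setoid.ker_apply_mk_out a

lemma fiberRep_eq_of_apply_eq {f : ι → κ} {a b : ι} (h : f a = f b) :
    fiberRep f a = fiberRep f b :=
  congrArg Quotient.out (Quotient.sound (Setoid.ker_def.mpr h))

end FiberRep

section Indices

variable {s m : ℕ}

lemma exists_loIdx_or_linIdx (i : Fin (2 * s + m)) :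
    (∃ α : Fin s, i = loIdx α) ∨ ∃ β : Fin (s + m), i = linIdx β := by
  by_cases h : (i : ℕ) < s
  · exact .inl ⟨⟨i, h⟩, rfl⟩
  · exact .inr ⟨⟨i - s, by omega⟩, Fin.ext (by simp only [linIdx]; omega)⟩

lemma exists_linIdx_eq_hiIdx_or_le (β : Fin (s + m)) :
    (∃ α : Fin s, linIdx β = hiIdx α) ∨ 2 * s ≤ (linIdx β : ℕ) := by
  by_cases h : (β : ℕ) < s
  · exact .inl ⟨⟨β, h⟩, rfl⟩
  · exact .inr (by simp only [linIdx]; omega)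

end Indices

namespace Csm

variable {s m : ℕ} {D : Type} {RD : Fin (2 * s + m) → D → D → Prop}

lemma isPartialOrder_loIdx (hD : Csm s m RD) (α : Fin s) : IsPartialOrder D (RD (loIdx α)) :=
  hD.1 _ α.isLt

lemma isLinearOrder_linIdx (hD : Csm s m RD) (β : Fin (s + m)) :
    IsLinearOrder D (RD (linIdx β)) :=
  hD.2.1 _ (Nat.le_add_right _ _)

lemma isLinearOrder_hiIdx (hD : Csm s m RD) (α : Fin s) : IsLinearOrder D (RD (hiIdx α)) :=
  hD.isLinearOrder_linIdx (Fin.castAdd m α)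

end Csm

section Repair

variable {t s m : ℕ} (prec : Fin t → Fin t → Prop) (ii jj : Fin s → Fin t) {D : Type}

noncomputable def repairRel (RD : Fin (2 * s + m) → D → D → Prop) :
    Fin (2 * s + m) → D → D → Prop := fun i x y =>
  if h : (i : ℕ) < s then
    (∀ γ, prec (ii ⟨i, h⟩) (ii γ) → RD (loIdx γ) x y) ∧
    (∀ β, prec (ii ⟨i, h⟩) (jj β) → RD (hiIdx (fiberRep jj β)) x y)
  else if h' : (i : ℕ) < 2 * s then RD (hiIdx (fiberRep jj ⟨i - s, by omega⟩)) x y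
  else RD i x y

variable {prec ii jj} {RD : Fin (2 * s + m) → D → D → Prop}

lemma repairRel_loIdx (α : Fin s) :
    repairRel prec ii jj RD (loIdx α) = fun x y =>
      (∀ γ, prec (ii α) (ii γ) → RD (loIdx γ) x y) ∧
      (∀ β, prec (ii α) (jj β) → RD (hiIdx (fiberRep jj β)) x y) := by
  funext x y
  exact dif_pos α.isLt

lemma repairRel_hiIdx (α : Fin s) :
    repairRel prec ii jj RD (hiIdx α) = RD (hiIdx (fiberRep jj α)) := by
  have hα := α.isLt
  funext x y
  simp only [repairRel, hiIdx, dif_neg (show ¬ s + (α : ℕ) < s by omega),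
    dif_pos (show s + (α : ℕ) < 2 * s by omega), Nat.add_sub_cancel_left]

lemma repairRel_of_two_mul_le {i : Fin (2 * s + m)} (hi : 2 * s ≤ (i : ℕ)) :
    repairRel prec ii jj RD i = RD i := by
  funext x y
  simp only [repairRel, dif_neg (show ¬ (i : ℕ) < s by omega),
    dif_neg (show ¬ (i : ℕ) < 2 * s by omega)]

lemma isPartialOrder_repairRel_loIdx (hprec : Std.Refl prec) (hD : Csm s m RD) (α : Fin s) :
    IsPartialOrder D (repairRel prec ii jj RD (loIdx α)) := by
  have hlo := hD.isPartialOrder_loIdx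
  have hhi := hD.isLinearOrder_hiIdx
  rw [repairRel_loIdx]
  refine { refl := ?_, trans := ?_, antisymm := ?_ }
  · exact fun x => ⟨fun γ _ => (hlo γ).refl x, fun β _ => (hhi _).refl x⟩
  · rintro x y z ⟨hxy, hxy'⟩ ⟨hyz, hyz'⟩
    exact ⟨fun γ hγ => (hlo γ).trans x y z (hxy γ hγ) (hyz γ hγ),
      fun β hβ => (hhi _).trans x y z (hxy' β hβ) (hyz' β hβ)⟩
  · rintro x y ⟨hxy, -⟩ ⟨hyx, -⟩
    exact (hlo α).antisymm x y (hxy α (hprec.refl _)) (hyx α (hprec.refl _))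

lemma isLinearOrder_repairRel_linIdx (hD : Csm s m RD) (β : Fin (s + m)) :
    IsLinearOrder D (repairRel prec ii jj RD (linIdx β)) := by
  rcases exists_linIdx_eq_hiIdx_or_le β with ⟨α, hα⟩ | hle
  · rw [hα, repairRel_hiIdx]
    exact hD.isLinearOrder_hiIdx _
  · rw [repairRel_of_two_mul_le hle]
    exact hD.isLinearOrder_linIdx β

lemma kbarT_repairRel (hprec : IsPreorder (Fin t) prec) (hD : Csm s m RD) :
    KbarT prec ii jj (repairRel prec ii jj RD) := by
  refine ⟨isPartialOrder_repairRel_loIdx hprec.toRefl hD, isLinearOrder_repairRel_linIdx hD,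
    ?mp2, ?mp3, ?mp4⟩
  case mp2 =>
    intro α β hαβ x y
    rw [repairRel_loIdx, repairRel_loIdx]
    rintro ⟨hlo, hhi⟩
    exact ⟨fun γ hγ => hlo γ (hprec.trans _ _ _ hαβ hγ),
      fun γ hγ => hhi γ (hprec.trans _ _ _ hαβ hγ)⟩
  case mp3 =>
    intro α β hαβ x y
    rw [repairRel_loIdx, repairRel_hiIdx]
    exact fun h => h.2 β hαβ
  case mp4 =>
    intro α β hαβ x y
    rw [repairRel_hiIdx, repairRel_hiIdx, fiberRep_eq_of_apply_eq hαβ]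

variable {B : Type} {RB : Fin (2 * s + m) → B → B → Prop}

lemma isEmb_repairRel (hprec : Std.Refl prec) (hB : KbarT prec ii jj RB) {e : B → D}
    (he : IsEmb RB RD e) : IsEmb RB (repairRel prec ii jj RD) e := by
  obtain ⟨-, -, hB₂, hB₃, hB₄⟩ := hB
  refine ⟨he.1, fun i b b' => ?_⟩
  rcases exists_loIdx_or_linIdx i with ⟨α, rfl⟩ | ⟨β, rfl⟩
  · rw [repairRel_loIdx]
    constructor
    · intro hb
      refine ⟨fun γ hγ => (he.2 _ b b').mp (hB₂ α γ hγ b b' hb), fun β hβ => ?_⟩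
      rw [← apply_fiberRep jj β] at hβ
      exact (he.2 _ b b').mp (hB₃ α _ hβ b b' hb)
    · exact fun hb => (he.2 _ b b').mpr (hb.1 α (hprec.refl _))
  · rcases exists_linIdx_eq_hiIdx_or_le β with ⟨α, hα⟩ | hle
    · rw [hα, repairRel_hiIdx, hB₄ α _ (apply_fiberRep jj α).symm]
      exact he.2 _ b b'
    · rw [repairRel_of_two_mul_le hle]
      exact he.2 _ b b'

end Repair

theorem KbarT_closed_for_binary_diagrams_general
    (t : ℕ) (prec : Fin t → Fin t → Prop)
    (hprec : IsPartialOrder (Fin t) prec)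
    (m : ℕ)
    (s : ℕ) (ii jj : Fin s → Fin t)
    (A B : Type)
    (RA : Fin (2 * s + m) → A → A → Prop) (RB : Fin (2 * s + m) → B → B → Prop)
    (hB : KbarT prec ii jj RB)
    (I J : Type)
    (j₁ j₂ : I → J)
    (u v : I → {f : A → B // IsEmb RA RB f})
    (hcone : ∃ (D : Type) (_ : Fintype D) (RD : Fin (2 * s + m) → D → D → Prop),
      Csm s m RD ∧
      ∃ e : J → {g : B → D // IsEmb RB RD g},
        ∀ p : I, (e (j₁ p)).1 ∘ (u p).1 = (e (j₂ p)).1 ∘ (v p).1) :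
    ∃ (D' : Type) (_ : Fintype D') (RD' : Fin (2 * s + m) → D' → D' → Prop),
      KbarT prec ii jj RD' ∧
      ∃ e' : J → {g : B → D' // IsEmb RB RD' g},
        ∀ p : I, (e' (j₁ p)).1 ∘ (u p).1 = (e' (j₂ p)).1 ∘ (v p).1 := by
  obtain ⟨D, hfin, RD, hD, e, he⟩ := hcone
  exact ⟨D, hfin, repairRel prec ii jj RD, kbarT_repairRel hprec.toIsPreorder hD,
    fun j => ⟨(e j).1, isEmb_repairRel hprec.toRefl hB (e j).2⟩, he⟩

/-- For every template `T`, the class `K̄(T)` is closed for binary diagrams in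
`C(s, m)`, where `m` is the number of isolated points of `T` and
`(i_1, j_1), …, (i_s, j_s)` enumerates the pairs of non-isolated elements with
`i_α` strictly below `j_α` and `j_α` maximal among the non-isolated elements. -/
theorem KbarT_closed_for_binary_diagrams
    (t : ℕ) (ht : 1 ≤ t) (prec : Fin t → Fin t → Prop)
    (hprec : IsPartialOrder (Fin t) prec)
    (m : ℕ) (kk : Fin m → Fin t)
    (hkk_inj : Function.Injective kk)
    (hkk_range : ∀ p : Fin t, IsolatedPt prec p ↔ ∃ β : Fin m, kk β = p)
    (s : ℕ) (ii jj : Fin s → Fin t)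
    (hij_inj : Function.Injective (fun α => (ii α, jj α)))
    (hij_range : ∀ p q : Fin t,
      (¬ IsolatedPt prec p ∧ ¬ IsolatedPt prec q ∧ prec p q ∧ p ≠ q ∧
        MaximalInT' prec q) ↔ ∃ α : Fin s, ii α = p ∧ jj α = q)
    (A B : Type) [Fintype A] [Fintype B]
    (RA : Fin (2 * s + m) → A → A → Prop) (RB : Fin (2 * s + m) → B → B → Prop)
    (hA : KbarT prec ii jj RA) (hB : KbarT prec ii jj RB)
    (I J : Type) [Finite I] [Finite J]
    (j₁ j₂ : I → J)
    (u v : I → {f : A → B // IsEmb RA RB f})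
    (hcone : ∃ (D : Type) (_ : Fintype D) (RD : Fin (2 * s + m) → D → D → Prop),
      Csm s m RD ∧
      ∃ e : J → {g : B → D // IsEmb RB RD g},
        ∀ p : I, (e (j₁ p)).1 ∘ (u p).1 = (e (j₂ p)).1 ∘ (v p).1) :
    ∃ (D' : Type) (_ : Fintype D') (RD' : Fin (2 * s + m) → D' → D' → Prop),
      KbarT prec ii jj RD' ∧
      ∃ e' : J → {g : B → D' // IsEmb RB RD' g},
        ∀ p : I, (e' (j₁ p)).1 ∘ (u p).1 = (e' (j₂ p)).1 ∘ (v p).1 :=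
  KbarT_closed_for_binary_diagrams_general t prec hprec m s ii jj A B RA RB hB I J j₁ j₂ u v hcone
end

section
/- The class of all finite posets with a linear extension has the strong amalgamation property: for all structures A, B, C in the class and all embeddings f₁ : A → B and f₂ : A → C, there exist a structure D in the class and embeddings g₁ : B → D and g₂ : C → D such that g₁ ∘ f₁ = g₂ ∘ f₂ and g₁(B) ∩ g₂(C) = g₁(f₁(A)) = g₂(f₂(A)). -/
def EPos {A : Type} (R : Fin 2 → A → A → Prop) : Prop :=
  IsPartialOrder A (R 0) ∧ IsLinearOrder A (R 1) ∧ ∀ x y, R 0 x y → R 1 x y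

open Function Set

theorem Function.Injective.rel_iff_of_total {α β : Type*} {r : α → α → Prop} {s : β → β → Prop}
    [Std.Total r] [Std.Antisymm s] {f : α → β} (hf : Injective f)
    (h : ∀ a b, r a b → s (f a) (f b)) (a b : α) : s (f a) (f b) ↔ r a b := by
  refine ⟨fun hab => (total_of r a b).elim id fun hba => ?_, h a b⟩
  obtain rfl := hf (antisymm hab (h b a hba))
  exact hba

abbrev Amalgam {A C : Type*} (B : Type*) (f₂ : A → C) : Type _ :=
  B ⊕ {c : C // c ∉ range f₂}

namespace Amalgam

variable {A B C : Type*} (f₁ : A → B) (f₂ : A → C)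

open Classical in
noncomputable def right (c : C) : Amalgam B f₂ :=
  if h : c ∈ range f₂ then .inl (f₁ h.choose) else .inr ⟨c, h⟩

theorem right_cases (c : C) :
    (∃ a, f₂ a = c ∧ right f₁ f₂ c = .inl (f₁ a)) ∨
      ∃ h : c ∉ range f₂, right f₁ f₂ c = .inr ⟨c, h⟩ := by
  by_cases h : c ∈ range f₂
  · exact .inl ⟨h.choose, h.choose_spec, dif_pos h⟩
  · exact .inr ⟨h, dif_neg h⟩

variable {f₁ f₂}

theorem right_apply (hf₂ : Injective f₂) (a : A) : right f₁ f₂ (f₂ a) = .inl (f₁ a) := by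
  have h : f₂ a ∈ range f₂ := mem_range_self a
  rw [right, dif_pos h, hf₂ h.choose_spec]

theorem right_comp (hf₂ : Injective f₂) : right f₁ f₂ ∘ f₂ = Sum.inl ∘ f₁ :=
  funext (right_apply hf₂)

theorem right_injective (hf₁ : Injective f₁) : Injective (right f₁ f₂) := by
  intro c c' h
  rcases right_cases f₁ f₂ c with ⟨a, rfl, hc⟩ | ⟨_, hc⟩ <;>
    rcases right_cases f₁ f₂ c' with ⟨a', rfl, hc'⟩ | ⟨_, hc'⟩ <;>
    rw [hc, hc'] at h <;> simp only [reduceCtorEq, Sum.inl.injEq, Sum.inr.injEq] at h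
  · rw [hf₁ h]
  · exact congrArg Subtype.val h

theorem range_inl_inter_range_right (hf₂ : Injective f₂) :
    range Sum.inl ∩ range (right f₁ f₂) = range (Sum.inl ∘ f₁) := by
  refine Subset.antisymm ?_ fun _ ⟨a, ha⟩ => ⟨⟨f₁ a, ha⟩, f₂ a, (right_apply hf₂ a).trans ha⟩
  rintro _ ⟨⟨b, rfl⟩, c, hc⟩
  rcases right_cases f₁ f₂ c with ⟨a, -, hca⟩ | ⟨_, hca⟩ <;> rw [hca] at hc
  · exact ⟨a, hc⟩
  · cases hc

variable (f₁ f₂) in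
def rel (r : B → B → Prop) (s : C → C → Prop) : Amalgam B f₂ → Amalgam B f₂ → Prop
  | .inl b, .inl b' => r b b'
  | .inl b, .inr c => ∃ a, r b (f₁ a) ∧ s (f₂ a) c
  | .inr c, .inl b => ∃ a, s c (f₂ a) ∧ r (f₁ a) b
  | .inr c, .inr c' => s c c'

variable {r r' : B → B → Prop} {s s' : C → C → Prop}

theorem rel_mono (hr : ∀ b b', r b b' → r' b b') (hs : ∀ c c', s c c' → s' c c') :
    ∀ x y, rel f₁ f₂ r s x y → rel f₁ f₂ r' s' x y := by
  rintro (b | c) (b' | c') h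
  · exact hr _ _ h
  · obtain ⟨a, hb, hc⟩ := h
    exact ⟨a, hr _ _ hb, hs _ _ hc⟩
  · obtain ⟨a, hc, hb⟩ := h
    exact ⟨a, hs _ _ hc, hr _ _ hb⟩
  · exact hs _ _ h

variable (hrs : ∀ a a', r (f₁ a) (f₁ a') ↔ s (f₂ a) (f₂ a'))
include hrs

theorem isPreorder_rel [IsPreorder B r] [IsPreorder C s] : IsPreorder _ (rel f₁ f₂ r s) where
  refl
    | .inl b => refl_of r b
    | .inr c => refl_of s c.1
  trans := by
    rintro (b | c) (b' | c') (b'' | c'') h h'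
    · exact trans_of r h h'
    · obtain ⟨a, hb, hc⟩ := h'
      exact ⟨a, trans_of r h hb, hc⟩
    · obtain ⟨a, hb, hc⟩ := h
      obtain ⟨a', hc', hb'⟩ := h'
      exact trans_of r hb (trans_of r ((hrs a a').2 (trans_of s hc hc')) hb')
    · obtain ⟨a, hb, hc⟩ := h
      exact ⟨a, hb, trans_of s hc h'⟩
    · obtain ⟨a, hc, hb⟩ := h
      exact ⟨a, hc, trans_of r hb h'⟩
    · obtain ⟨a, hc, hb⟩ := h
      obtain ⟨a', hb', hc'⟩ := h'
      exact trans_of s hc (trans_of s ((hrs a a').1 (trans_of r hb hb')) hc')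
    · obtain ⟨a, hc, hb⟩ := h'
      exact ⟨a, trans_of s h hc, hb⟩
    · exact trans_of s h h'

theorem isPartialOrder_rel [IsPartialOrder B r] [IsPartialOrder C s] :
    IsPartialOrder _ (rel f₁ f₂ r s) where
  toIsPreorder := isPreorder_rel hrs
  antisymm := by
    rintro (b | ⟨c, hc⟩) (b' | ⟨c', hc'⟩) h h'
    · exact congrArg Sum.inl (antisymm h h')
    · obtain ⟨a, hb, hca⟩ := h
      obtain ⟨a', hc'a', hb'⟩ := h'
      have : s (f₂ a') (f₂ a) := (hrs a' a).1 (trans_of r hb' hb)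
      exact (hc' ⟨a, antisymm hca (trans_of s hc'a' this)⟩).elim
    · obtain ⟨a, hca, hb⟩ := h
      obtain ⟨a', hb', hc'a'⟩ := h'
      have : s (f₂ a) (f₂ a') := (hrs a a').1 (trans_of r hb hb')
      exact (hc ⟨a', antisymm hc'a' (trans_of s hca this)⟩).elim
    · exact congrArg Sum.inr (Subtype.ext (antisymm h h'))

theorem rel_right_right_iff [IsPreorder B r] [IsPreorder C s] (c c' : C) :
    rel f₁ f₂ r s (right f₁ f₂ c) (right f₁ f₂ c') ↔ s c c' := by
  rcases right_cases f₁ f₂ c with ⟨a, rfl, hc⟩ | ⟨_, hc⟩ <;>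
    rcases right_cases f₁ f₂ c' with ⟨a', rfl, hc'⟩ | ⟨_, hc'⟩ <;> rw [hc, hc'] <;>
    dsimp only [rel]
  · exact hrs a a'
  · exact ⟨fun ⟨a'', hb, hc⟩ => trans_of s ((hrs a a'').1 hb) hc,
      fun h => ⟨a, refl_of r _, h⟩⟩
  · exact ⟨fun ⟨a'', hc, hb⟩ => trans_of s hc ((hrs a'' a').1 hb),
      fun h => ⟨a', h, refl_of r _⟩⟩
  · rfl

end Amalgam

theorem finite_posets_with_linear_extension_strong_amalgamation_general
    (A B C : Type) [Fintype B] [Fintype C]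
    (RA : Fin 2 → A → A → Prop) (RB : Fin 2 → B → B → Prop) (RC : Fin 2 → C → C → Prop)
    (hB : EPos RB) (hC : EPos RC)
    (f₁ : A → B) (f₂ : A → C)
    (hf₁ : IsEmb RA RB f₁) (hf₂ : IsEmb RA RC f₂) :
    ∃ (D : Type) (_ : Fintype D) (RD : Fin 2 → D → D → Prop),
      EPos RD ∧
      ∃ (g₁ : B → D) (g₂ : C → D),
        IsEmb RB RD g₁ ∧ IsEmb RC RD g₂ ∧
        g₁ ∘ f₁ = g₂ ∘ f₂ ∧
        Set.range g₁ ∩ Set.range g₂ = Set.range (g₁ ∘ f₁) ∧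
        Set.range (g₁ ∘ f₁) = Set.range (g₂ ∘ f₂) := by
  obtain ⟨hB₀, hB₁, hB₀₁⟩ := hB
  obtain ⟨hC₀, hC₁, hC₀₁⟩ := hC
  have hrs i a a' : RB i (f₁ a) (f₁ a') ↔ RC i (f₂ a) (f₂ a') :=
    (hf₁.2 i a a').symm.trans (hf₂.2 i a a')
  have hD₀ := Amalgam.isPartialOrder_rel (hrs 0)
  have := Amalgam.isPartialOrder_rel (hrs 1)
  obtain ⟨L, hL, hL₁⟩ := extend_partialOrder (Amalgam.rel f₁ f₂ (RB 1) (RC 1))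
  let RD := ![Amalgam.rel f₁ f₂ (RB 0) (RC 0), L]
  have hg₁ : IsEmb RB RD Sum.inl := by
    refine ⟨Sum.inl_injective, Fin.forall_fin_two.2 ⟨fun _ _ => Iff.rfl, fun b b' => ?_⟩⟩
    exact (Sum.inl_injective.rel_iff_of_total (r := RB 1) (s := L)
      (fun _ _ h => hL₁ _ _ h) b b').symm
  have hg₂ : IsEmb RC RD (Amalgam.right f₁ f₂) := by
    refine ⟨Amalgam.right_injective hf₁.1, Fin.forall_fin_two.2
      ⟨fun c c' => (Amalgam.rel_right_right_iff (hrs 0) c c').symm, fun c c' => ?_⟩⟩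
    exact ((Amalgam.right_injective hf₁.1).rel_iff_of_total (r := RC 1) (s := L)
      (fun _ _ h => hL₁ _ _ ((Amalgam.rel_right_right_iff (hrs 1) _ _).2 h)) c c').symm
  refine ⟨_, Fintype.ofFinite _, RD,
    ⟨hD₀, hL, fun x y h => hL₁ x y (Amalgam.rel_mono hB₀₁ hC₀₁ x y h)⟩, _, _, hg₁, hg₂,
    (Amalgam.right_comp hf₂.1).symm, Amalgam.range_inl_inter_range_right hf₂.1, ?_⟩
  rw [Amalgam.right_comp hf₂.1]

/-- The class of all finite posets with a linear extension has the strong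
amalgamation property. -/
theorem finite_posets_with_linear_extension_strong_amalgamation
    (A B C : Type) [Fintype A] [Fintype B] [Fintype C]
    (RA : Fin 2 → A → A → Prop) (RB : Fin 2 → B → B → Prop) (RC : Fin 2 → C → C → Prop)
    (hA : EPos RA) (hB : EPos RB) (hC : EPos RC)
    (f₁ : A → B) (f₂ : A → C)
    (hf₁ : IsEmb RA RB f₁) (hf₂ : IsEmb RA RC f₂) :
    ∃ (D : Type) (_ : Fintype D) (RD : Fin 2 → D → D → Prop),
      EPos RD ∧
      ∃ (g₁ : B → D) (g₂ : C → D),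
        IsEmb RB RD g₁ ∧ IsEmb RC RD g₂ ∧
        g₁ ∘ f₁ = g₂ ∘ f₂ ∧
        Set.range g₁ ∩ Set.range g₂ = Set.range (g₁ ∘ f₁) ∧
        Set.range (g₁ ∘ f₁) = Set.range (g₂ ∘ f₂) :=
  finite_posets_with_linear_extension_strong_amalgamation_general A B C RA RB RC hB hC f₁ f₂ hf₁ hf₂
end
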